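/- arXiv:2009.12665 — 5 statements merged into one kernel-verified Lean document; each statement's English description precedes it below -/
import Mathlib

section
/- Let (Ω, ℱ, μ) be a probability space, E a measurable space, Z : Ω → E, U : Ω → ℝ, Y : Ω → ℝ random variables with Y integrable, and g : E → ℝ measurable. Define Y* := g(Z) + U. Assume: (i) Z and U are independent; (ii) h : ℝ → ℝ is measurable, h(Y*) is integrable, and h ∘ Y* is a version of the conditional expectation E[Y | σ(Y*, Z)]; (iii) for every t ∈ ℝ the random variable ω ↦ h(t + U(ω)) is integrable. Define H : ℝ → ℝ by H(t) := E[h(t + U)]. Then H(g(Z)) is a version of E[Y | σ(Z)], i.e. E[Y | σ(Z)] = H ∘ g ∘ Z holds μ-almost surely. -/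
/-!
By the tower property, `E[Y | σ(Z)] = E[h(Y*) | σ(Z)] = E[h(g(Z) + U) | σ(Z)]`. Since `U` is
independent of `Z`, the regular conditional distribution of `U` given `Z` is the law of `U`
itself, so conditioning on `Z` amounts to freezing `Z` and integrating `U` out; this yields
`H(g(Z))`.
-/

open MeasureTheory ProbabilityTheory

namespace ProbabilityTheory

variable {Ω α β F : Type*} {mΩ : MeasurableSpace Ω} {mα : MeasurableSpace α}
  [MeasurableSpace β] [StandardBorelSpace β] [Nonempty β]
  [NormedAddCommGroup F] [NormedSpace ℝ F] [CompleteSpace F]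
  {μ : Measure Ω} [IsFiniteMeasure μ] {X : Ω → α} {Y : Ω → β}

lemma IndepFun.condDistrib_ae_eq_const (hXY : IndepFun X Y μ) (hX : Measurable X)
    (hY : Measurable Y) :
    condDistrib Y X μ =ᵐ[μ.map X] Kernel.const α (μ.map Y) := by
  refine condDistrib_ae_eq_of_measure_eq_compProd X hY.aemeasurable ?_
  rw [Measure.compProd_const]
  exact (indepFun_iff_map_prod_eq_prod_map_map hX.aemeasurable hY.aemeasurable).mp hXY

lemma IndepFun.condExp_comp_prodMk_ae_eq (hXY : IndepFun X Y μ) (hX : Measurable X)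
    (hY : Measurable Y) {f : α × β → F} (hf : StronglyMeasurable f)
    (hf_int : Integrable (fun ω => f (X ω, Y ω)) μ) :
    μ[fun ω => f (X ω, Y ω) | mα.comap X] =ᵐ[μ] fun ω => ∫ y, f (X ω, y) ∂(μ.map Y) := by
  filter_upwards [condExp_prod_ae_eq_integral_condDistrib hX hY.aemeasurable hf hf_int,
    ae_of_ae_map hX.aemeasurable (hXY.condDistrib_ae_eq_const hX hY)] with ω hcond hconst
  rw [hcond, hconst, Kernel.const_apply]

end ProbabilityTheory

theorem stmt_0_general {Ω E : Type*} [MeasurableSpace Ω] [MeasurableSpace E]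
    (μ : Measure Ω) [IsProbabilityMeasure μ]
    (Z : Ω → E) (U Y : Ω → ℝ)
    (hZmeas : Measurable Z) (hUmeas : Measurable U)
    (g : E → ℝ) (hgmeas : Measurable g)
    (Ystar : Ω → ℝ) (hYstar : ∀ ω, Ystar ω = g (Z ω) + U ω)
    (hindep : IndepFun Z U μ)
    (h : ℝ → ℝ) (hhmeas : Measurable h)
    (hhint : Integrable (fun ω => h (Ystar ω)) μ)
    (hcond : μ[Y | MeasurableSpace.comap (fun ω => (Ystar ω, Z ω)) inferInstance]
        =ᵐ[μ] fun ω => h (Ystar ω))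
    (H : ℝ → ℝ) (hH : ∀ t : ℝ, H t = ∫ ω, h (t + U ω) ∂μ) :
    μ[Y | MeasurableSpace.comap Z inferInstance] =ᵐ[μ] fun ω => H (g (Z ω)) := by
  obtain rfl : Ystar = fun ω => g (Z ω) + U ω := funext hYstar
  have hpair : Measurable fun ω => (g (Z ω) + U ω, Z ω) :=
    ((hgmeas.comp hZmeas).add hUmeas).prodMk hZmeas
  have hle : MeasurableSpace.comap Z inferInstance ≤
      MeasurableSpace.comap (fun ω => (g (Z ω) + U ω, Z ω)) inferInstance :=
    (measurable_snd.comp (comap_measurable fun ω => (g (Z ω) + U ω, Z ω))).comap_le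
  have tower : μ[Y | MeasurableSpace.comap Z inferInstance] =ᵐ[μ]
      μ[fun ω => h (g (Z ω) + U ω) | MeasurableSpace.comap Z inferInstance] :=
    (condExp_condExp_of_le hle hpair.comap_le).symm.trans (condExp_congr_ae hcond)
  have hf : StronglyMeasurable fun p : E × ℝ => h (g p.1 + p.2) :=
    (hhmeas.comp ((hgmeas.comp measurable_fst).add measurable_snd)).stronglyMeasurable
  refine tower.trans ((hindep.condExp_comp_prodMk_ae_eq hZmeas hUmeas hf hhint).trans ?_)
  refine Filter.Eventually.of_forall fun ω => ?_
  show ∫ u, h (g (Z ω) + u) ∂μ.map U = H (g (Z ω))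
  rw [hH, integral_map hUmeas.aemeasurable]
  exact (hhmeas.comp (measurable_const.add measurable_id)).aestronglyMeasurable

/-- Theorem 2.1 (core representation, no controls): in the model `Y* = g(Z) + U` with
`Z ⊥ U`, if `h ∘ Y*` is a version of `E[Y | σ(Y*, Z)]`, then `H ∘ g ∘ Z` with
`H t := E[h (t + U)]` is a version of `E[Y | σ(Z)]`. -/
theorem stmt_0 {Ω E : Type*} [MeasurableSpace Ω] [MeasurableSpace E]
    (μ : Measure Ω) [IsProbabilityMeasure μ]
    (Z : Ω → E) (U Y : Ω → ℝ)
    (hZmeas : Measurable Z) (hUmeas : Measurable U) (hYmeas : Measurable Y)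
    (hYint : Integrable Y μ)
    (g : E → ℝ) (hgmeas : Measurable g)
    (Ystar : Ω → ℝ) (hYstar : ∀ ω, Ystar ω = g (Z ω) + U ω)
    (hindep : IndepFun Z U μ)
    (h : ℝ → ℝ) (hhmeas : Measurable h)
    (hhint : Integrable (fun ω => h (Ystar ω)) μ)
    (hcond : μ[Y | MeasurableSpace.comap (fun ω => (Ystar ω, Z ω)) inferInstance]
        =ᵐ[μ] fun ω => h (Ystar ω))
    (hint : ∀ t : ℝ, Integrable (fun ω => h (t + U ω)) μ)
    (H : ℝ → ℝ) (hH : ∀ t : ℝ, H t = ∫ ω, h (t + U ω) ∂μ) :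
    μ[Y | MeasurableSpace.comap Z inferInstance] =ᵐ[μ] fun ω => H (g (Z ω)) :=
  stmt_0_general μ Z U Y hZmeas hUmeas g hgmeas Ystar hYstar hindep h hhmeas hhint hcond H hH
end

section
/- Let M : ℝ → ℝ be strictly monotone, and suppose there exist functions p, q : ℝ → ℝ such that M(s + t) = p(s) + q(t) for all s, t ∈ ℝ. Suppose furthermore there exist x₁ ≠ x₂ in ℝ with M(x₁) = x₁ and M(x₂) = x₂. Then M(x) = x for all x ∈ ℝ. -/
lemma lin_of_mono (f : ℝ →+ ℝ) (hf : Monotone f) : ∀ x : ℝ, f x = f 1 * x := by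
  intro x
  have hc : 0 ≤ f 1 := by simpa using hf (show (0:ℝ) ≤ 1 by norm_num)
  have hrat : ∀ r : ℚ, f (r : ℝ) = f 1 * r := by
    intro r
    have := map_ratCast_smul f ℝ ℝ r (1 : ℝ)
    simpa [smul_eq_mul, mul_comm] using this
  have key : ∀ ε : ℝ, 0 < ε → |f x - f 1 * x| ≤ f 1 * ε := by
    intro ε hε
    obtain ⟨r, hr1, hr2⟩ := exists_rat_btwn (show x - ε < x by linarith)
    obtain ⟨s, hs1, hs2⟩ := exists_rat_btwn (show x < x + ε by linarith)
    have h1 : f 1 * r ≤ f x := by rw [← hrat]; exact hf hr2.le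
    have h2 : f x ≤ f 1 * s := by rw [← hrat]; exact hf hs1.le
    rw [abs_le]
    constructor <;> nlinarith [mul_le_mul_of_nonneg_left hr1.le hc,
      mul_le_mul_of_nonneg_left hs2.le hc]
  by_contra h
  have habs : 0 < |f x - f 1 * x| := abs_pos.mpr (sub_ne_zero.mpr h)
  rcases eq_or_lt_of_le hc with hc0 | hc0
  · have := key 1 one_pos
    rw [← hc0] at this
    norm_num at this
    exact h (by rw [← hc0, zero_mul]; exact this)
  · have h5 := key (|f x - f 1 * x| / (2 * f 1)) (by positivity)
    have h6 : f 1 * (|f x - f 1 * x| / (2 * f 1)) = |f x - f 1 * x| / 2 := by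
      field_simp
    rw [h6] at h5
    linarith

/-- Corollary 2.1 (point identification): a strictly monotone solution of the
Pexider-type equation `M (s + t) = p s + q t` with two distinct fixed points is the
identity. -/
theorem stmt_6 (M : ℝ → ℝ) (hM : StrictMono M ∨ StrictAnti M)
    (p q : ℝ → ℝ) (hpq : ∀ s t : ℝ, M (s + t) = p s + q t)
    (x₁ x₂ : ℝ) (hne : x₁ ≠ x₂) (h₁ : M x₁ = x₁) (h₂ : M x₂ = x₂) :
    ∀ x : ℝ, M x = x := by
  have hadd : ∀ s t : ℝ, M (s + t) - M 0 = (M s - M 0) + (M t - M 0) := by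
    intro s t
    have e1 := hpq s t
    have e2 := hpq s 0
    have e3 := hpq 0 t
    have e4 := hpq 0 0
    simp only [add_zero, zero_add] at e1 e2 e3 e4
    linarith
  set g : ℝ → ℝ := fun x => M x - M 0 with hg
  have hgadd : ∀ s t, g (s + t) = g s + g t := hadd
  have main : ∀ (f : ℝ → ℝ), (∀ s t, f (s + t) = f s + f t) → Monotone f →
      ∀ x, f x = f 1 * x := by
    intro f hf hmono
    have h0 : f 0 = 0 := by have := hf 0 0; simp at this; linarith
    exact lin_of_mono ⟨⟨f, h0⟩, hf⟩ hmono
  have hlin : ∀ x, g x = g 1 * x := by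
    rcases hM with h | h
    · exact main g hgadd (fun a b hab => sub_le_sub_right (h.monotone hab) (M 0))
    · have hneg : ∀ x, (-g) x = (-g) 1 * x := main (-g)
        (fun s t => by simp only [Pi.neg_apply, hgadd]; ring)
        (fun a b hab => by
          simp only [Pi.neg_apply, hg, neg_sub]
          have := h.antitone hab; linarith)
      intro x
      have := hneg x
      simp only [Pi.neg_apply] at this
      linarith
  have hxform : ∀ x, M x = g 1 * x + M 0 := by
    intro x
    have := hlin x
    simp only [hg] at this
    simp only [hg]
    linarith
  have e1 := hxform x₁; rw [h₁] at e1
  have e2 := hxform x₂; rw [h₂] at e2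
  have key : (g 1 - 1) * (x₁ - x₂) = 0 := by linear_combination e2 - e1
  rcases mul_eq_zero.mp key with hk | hk
  · have hc1 : g 1 = 1 := by linarith
    have hM0 : M 0 = 0 := by rw [hc1] at e1; linarith
    intro x
    rw [hxform x, hc1, hM0]; ring
  · exact absurd (sub_eq_zero.mp hk) hne
end

section
/- Let (Ω, ℱ, μ) be a probability space, E a measurable space, Z an E-valued random variable, δ > 0 and C > 0. Let g, φ : E → ℝ be measurable with |φ(x) − g(x)| ≤ δ for all x ∈ E, and suppose the cumulative distribution function F of g(Z), F(t) := μ(g(Z) ≤ t), is C-Lipschitz: |F(a) − F(b)| ≤ C|a − b| for all a, b ∈ ℝ. Then for every x ∈ E: E[ |1{φ(Z) < φ(x)} − 1{g(Z) < g(x)}| ] ≤ 4Cδ. -/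
/-!
Perturbing both `g (Z ω)` and `g x` by at most `δ` can flip the comparison `g (Z ω) < g x`
only when `g (Z ω)` lies within `2δ` of `g x`. So the integrand is bounded by the indicator of
`g (Z ω) ∈ [g x - 2δ, g x + 2δ)`, whose probability is at most `C · 4δ` because the
distribution function of `g (Z)` is `C`-Lipschitz (hence has no atoms).
-/

open MeasureTheory Filter Topology Set

lemma abs_ite_lt_sub_ite_lt_le_indicator {δ u v u' v' : ℝ} (hu : |u' - u| ≤ δ)
    (hv : |v' - v| ≤ δ) :
    |(if u' < v' then (1 : ℝ) else 0) - (if u < v then 1 else 0)|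
      ≤ (Ico (v - 2 * δ) (v + 2 * δ)).indicator 1 u := by
  obtain ⟨hu₁, hu₂⟩ := abs_le.mp hu
  obtain ⟨hv₁, hv₂⟩ := abs_le.mp hv
  by_cases hlt' : u' < v' <;> by_cases hlt : u < v
  · simp [hlt', hlt, indicator_nonneg]
  · have hmem : u ∈ Ico (v - 2 * δ) (v + 2 * δ) := ⟨by linarith, by linarith⟩
    simp [hlt', hlt, hmem]
  · have hmem : u ∈ Ico (v - 2 * δ) (v + 2 * δ) := ⟨by linarith, by linarith⟩
    simp [hlt', hlt, hmem]
  · simp [hlt', hlt, indicator_nonneg]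

section LipschitzCDF

variable {Ω : Type*} [MeasurableSpace Ω] {μ : Measure Ω} [IsFiniteMeasure μ]
  {X : Ω → ℝ} {F : ℝ → ℝ} {C : ℝ}

lemma measureReal_preimage_Ioc_eq_sub (hX : Measurable X)
    (hF : ∀ t, F t = μ.real {ω | X ω ≤ t}) {a b : ℝ} (hab : a ≤ b) :
    μ.real (X ⁻¹' Ioc a b) = F b - F a := by
  have hsub : {ω | X ω ≤ a} ⊆ {ω | X ω ≤ b} := fun ω (h : X ω ≤ a) => h.trans hab
  have hdiff : X ⁻¹' Ioc a b = {ω | X ω ≤ b} \ {ω | X ω ≤ a} := by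
    ext ω
    simp [and_comm]
  rw [hdiff, measureReal_sdiff hsub (hX measurableSet_Iic), hF, hF]

lemma measureReal_preimage_Icc_le_of_lipschitz (hX : Measurable X)
    (hF : ∀ t, F t = μ.real {ω | X ω ≤ t}) (hLip : ∀ a b, |F a - F b| ≤ C * |a - b|)
    {a b : ℝ} (hab : a ≤ b) :
    μ.real (X ⁻¹' Icc a b) ≤ C * (b - a) := by
  have hle : ∀ η > 0, μ.real (X ⁻¹' Icc a b) ≤ C * (b - a + η) := by
    intro η hη
    calc μ.real (X ⁻¹' Icc a b)
        ≤ μ.real (X ⁻¹' Ioc (a - η) b) :=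
          measureReal_mono (preimage_mono (Icc_subset_Ioc (by linarith) le_rfl))
      _ = F b - F (a - η) := measureReal_preimage_Ioc_eq_sub hX hF (by linarith)
      _ ≤ |F b - F (a - η)| := le_abs_self _
      _ ≤ C * |b - (a - η)| := hLip _ _
      _ = C * (b - a + η) := by rw [abs_of_pos (by linarith)]; ring
  have hlim : Tendsto (fun η => C * (b - a + η)) (𝓝[>] 0) (𝓝 (C * (b - a))) := by
    have : Continuous fun η : ℝ => C * (b - a + η) := by fun_prop
    simpa using (this.tendsto 0).mono_left nhdsWithin_le_nhds
  exact ge_of_tendsto hlim (eventually_nhdsWithin_of_forall hle)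

end LipschitzCDF

theorem stmt_13_general {Ω E : Type*} [MeasurableSpace Ω] [MeasurableSpace E]
    (μ : Measure Ω) [IsProbabilityMeasure μ]
    (Z : Ω → E) (hZ : Measurable Z)
    (δ C : ℝ)
    (g φ : E → ℝ) (hg : Measurable g)
    (hclose : ∀ x : E, |φ x - g x| ≤ δ)
    (F : ℝ → ℝ) (hF : ∀ t : ℝ, F t = (μ {ω | g (Z ω) ≤ t}).toReal)
    (hLip : ∀ a b : ℝ, |F a - F b| ≤ C * |a - b|) :
    ∀ x : E,
      ∫ ω, |(if φ (Z ω) < φ x then (1 : ℝ) else 0)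
          - (if g (Z ω) < g x then (1 : ℝ) else 0)| ∂μ
        ≤ 4 * C * δ := by
  intro x
  set I := Ico (g x - 2 * δ) (g x + 2 * δ)
  have hgZ : Measurable (g ∘ Z) := hg.comp hZ
  have hδ : 0 ≤ δ := (abs_nonneg _).trans (hclose x)
  calc _ ≤ ∫ ω, ((g ∘ Z) ⁻¹' I).indicator 1 ω ∂μ :=
        integral_mono_of_nonneg (.of_forall fun _ => abs_nonneg _)
          ((integrable_const 1).indicator (hgZ measurableSet_Ico))
          (.of_forall fun ω => (abs_ite_lt_sub_ite_lt_le_indicator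
            (hclose (Z ω)) (hclose x)).trans_eq (indicator_comp_right _).symm)
    _ = μ.real ((g ∘ Z) ⁻¹' I) := integral_indicator_one (hgZ measurableSet_Ico)
    _ ≤ μ.real ((g ∘ Z) ⁻¹' Icc (g x - 2 * δ) (g x + 2 * δ)) :=
        measureReal_mono (preimage_mono Ico_subset_Icc_self)
    _ ≤ C * (g x + 2 * δ - (g x - 2 * δ)) :=
        measureReal_preimage_Icc_le_of_lipschitz hgZ hF hLip (by linarith)
    _ = 4 * C * δ := by ring

/-- Probabilistic bound used in Lemma B.1(i): if `φ` is uniformly within `δ` of `g` and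
the cdf of `g(Z)` is `C`-Lipschitz, then the expected absolute difference of rank
indicators is at most `4Cδ`. -/
theorem stmt_13 {Ω E : Type*} [MeasurableSpace Ω] [MeasurableSpace E]
    (μ : Measure Ω) [IsProbabilityMeasure μ]
    (Z : Ω → E) (hZ : Measurable Z)
    (δ C : ℝ) (hδ : 0 < δ) (hC : 0 < C)
    (g φ : E → ℝ) (hg : Measurable g) (hφ : Measurable φ)
    (hclose : ∀ x : E, |φ x - g x| ≤ δ)
    (F : ℝ → ℝ) (hF : ∀ t : ℝ, F t = (μ {ω | g (Z ω) ≤ t}).toReal)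
    (hLip : ∀ a b : ℝ, |F a - F b| ≤ C * |a - b|) :
    ∀ x : E,
      ∫ ω, |(if φ (Z ω) < φ x then (1 : ℝ) else 0)
          - (if g (Z ω) < g x then (1 : ℝ) else 0)| ∂μ
        ≤ 4 * C * δ :=
  stmt_13_general μ Z hZ δ C g φ hg hclose F hF hLip
end

section
/- Let E be a measurable space and μ a probability measure on ℝ × E (interpreted as the joint law of (Y, Z)), with marginal μ_Z on E; assume ∫ |y| dμ(y, z) < ∞. Suppose there exist a constant M̄ ≥ 0 and a measurable function m : E → ℝ with |m(z)| ≤ M̄ for all z, such that ∫ y·ψ(z) dμ(y, z) = ∫ m(z)·ψ(z) dμ_Z(z) for every bounded measurable ψ : E → ℝ. Let δ > 0, C > 0, and let g, φ : E → ℝ be measurable with |φ(x) − g(x)| ≤ δ for all x ∈ E, and suppose the cumulative distribution function of the pushforward of μ_Z under g is C-Lipschitz. Define D(z₁, z₂) := 1{φ(z₁) > φ(z₂)} − 1{g(z₁) > g(z₂)} and ν(y, z) := y·∫ D(z, z′) dμ_Z(z′) + ∫ y′·D(z′, z) dμ(y′, z′) − 2·∫∫ y₁·D(z₁, z₂) dμ(y₁,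 z₁) dμ_Z(z₂). Then |ν(y, z)| ≤ 4Cδ·(|y| + 3M̄) for all (y, z) ∈ ℝ × E. -/
open MeasureTheory

open Set

/-!
A change of ranking between `φ` and `g` at a pair `(z₁, z₂)` forces `|g z₁ - g z₂| ≤ 2δ`, so
every integral in `ν` only sees a band of width `4δ` in the values of `g`. The Lipschitz
distribution function of `g(Z)` gives such a band mass at most `4Cδ`, and the mean of `Y`
enters only through the conditional mean `m`, which is bounded by `M̄`.
-/

theorem measureReal_preimage_Icc_le {α : Type*} [MeasurableSpace α] {μ : Measure α}
    [IsFiniteMeasure μ] {g : α → ℝ} (hg : Measurable g) {C : ℝ}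
    (hLip : ∀ a b : ℝ, |μ.real {x | g x ≤ a} - μ.real {x | g x ≤ b}| ≤ C * |a - b|)
    {a b : ℝ} (hab : a ≤ b) :
    μ.real {x | g x ∈ Icc a b} ≤ C * (b - a) := by
  have hC : 0 ≤ C := by simpa using (abs_nonneg _).trans (hLip 1 0)
  refine le_of_forall_pos_le_add fun ε hε => ?_
  set η := ε / (C + 1)
  have hη : 0 < η := by positivity
  have hCη : C * η ≤ ε := by
    rw [mul_div_assoc', div_le_iff₀ (by linarith)]
    nlinarith
  have hsub : {x | g x ∈ Icc a b} ⊆ {x | g x ≤ b} \ {x | g x ≤ a - η} := fun x hx => by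
    simp only [mem_Icc, mem_ofPred_eq, mem_sdiff, not_le] at hx ⊢
    constructor <;> linarith
  calc μ.real {x | g x ∈ Icc a b}
      ≤ μ.real ({x | g x ≤ b} \ {x | g x ≤ a - η}) := measureReal_mono hsub
    _ = μ.real {x | g x ≤ b} - μ.real {x | g x ≤ a - η} :=
        measureReal_sdiff (fun x (hx : g x ≤ a - η) => show g x ≤ b by linarith)
          (measurableSet_le hg measurable_const)
    _ ≤ C * |b - (a - η)| := (le_abs_self _).trans (hLip _ _)
    _ = C * (b - a) + C * η := by rw [abs_of_nonneg (by linarith)]; ring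
    _ ≤ C * (b - a) + ε := by linarith

theorem abs_integral_le_mul_measureReal {α : Type*} [MeasurableSpace α] {μ : Measure α}
    [IsFiniteMeasure μ] {f : α → ℝ} {s : Set α} {M : ℝ} (hf : ∀ x ∉ s, f x = 0)
    (hM : ∀ x, |f x| ≤ M) :
    |∫ x, f x ∂μ| ≤ M * μ.real s := by
  rw [← setIntegral_eq_integral_of_forall_compl_eq_zero hf]
  exact norm_setIntegral_le_of_norm_le_const (measure_lt_top μ s) fun x _ =>
    (Real.norm_eq_abs _).trans_le (hM x)

section RankDiff

variable {E : Type*}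

noncomputable def rankDiff (φ g : E → ℝ) (z₁ z₂ : E) : ℝ :=
  (if φ z₂ < φ z₁ then 1 else 0) - (if g z₂ < g z₁ then 1 else 0)

theorem abs_rankDiff_le_one (φ g : E → ℝ) (z₁ z₂ : E) : |rankDiff φ g z₁ z₂| ≤ 1 := by
  unfold rankDiff
  split_ifs <;> norm_num

theorem rankDiff_eq_zero_of_lt_abs {φ g : E → ℝ} {δ : ℝ} (hclose : ∀ x, |φ x - g x| ≤ δ)
    {z₁ z₂ : E} (h : 2 * δ < |g z₁ - g z₂|) : rankDiff φ g z₁ z₂ = 0 := by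
  have h₁ := abs_le.mp (hclose z₁)
  have h₂ := abs_le.mp (hclose z₂)
  rcases lt_abs.mp h with h | h
  · simp [rankDiff, show φ z₂ < φ z₁ by linarith, show g z₂ < g z₁ by linarith]
  · simp [rankDiff, show ¬ φ z₂ < φ z₁ by linarith, show ¬ g z₂ < g z₁ by linarith]

theorem measurable_rankDiff_left [MeasurableSpace E] {φ g : E → ℝ} (hφ : Measurable φ)
    (hg : Measurable g) (z : E) : Measurable fun x => rankDiff φ g x z :=
  (Measurable.ite (measurableSet_lt measurable_const hφ) measurable_const measurable_const).sub
    (Measurable.ite (measurableSet_lt measurable_const hg) measurable_const measurable_const)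

variable [MeasurableSpace E] {μZ : Measure E} [IsFiniteMeasure μZ] {φ g : E → ℝ} {δ K : ℝ}

theorem abs_integral_rankDiff_right_le (hclose : ∀ x, |φ x - g x| ≤ δ)
    (hband : ∀ c, μZ.real {x | g x ∈ Icc (c - 2 * δ) (c + 2 * δ)} ≤ K) (z : E) :
    |∫ x, rankDiff φ g z x ∂μZ| ≤ K := by
  calc |∫ x, rankDiff φ g z x ∂μZ|
      ≤ 1 * μZ.real {x | g x ∈ Icc (g z - 2 * δ) (g z + 2 * δ)} :=
        abs_integral_le_mul_measureReal
          (fun x hx => rankDiff_eq_zero_of_lt_abs hclose (not_le.mp (mt mem_Icc_iff_abs_le.mp hx)))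
          (abs_rankDiff_le_one φ g z)
    _ ≤ K := by rw [one_mul]; exact hband _

theorem abs_integral_mul_rankDiff_left_le (hclose : ∀ x, |φ x - g x| ≤ δ)
    (hband : ∀ c, μZ.real {x | g x ∈ Icc (c - 2 * δ) (c + 2 * δ)} ≤ K)
    {w : E → ℝ} {M : ℝ} (hw : ∀ x, |w x| ≤ M) (z : E) :
    |∫ x, w x * rankDiff φ g x z ∂μZ| ≤ M * K := by
  have hM : 0 ≤ M := (abs_nonneg _).trans (hw z)
  calc |∫ x, w x * rankDiff φ g x z ∂μZ|
      ≤ M * μZ.real {x | g x ∈ Icc (g z - 2 * δ) (g z + 2 * δ)} := by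
        refine abs_integral_le_mul_measureReal (fun x hx => ?_) (fun x => ?_)
        · rw [rankDiff_eq_zero_of_lt_abs hclose, mul_zero]
          rw [abs_sub_comm]
          exact not_le.mp (mt mem_Icc_iff_abs_le.mp hx)
        · rw [abs_mul]
          exact (mul_le_of_le_one_right (abs_nonneg _) (abs_rankDiff_le_one φ g x z)).trans (hw x)
    _ ≤ M * K := mul_le_mul_of_nonneg_left (hband _) hM

end RankDiff

theorem stmt_14_general {E : Type*} [MeasurableSpace E]
    (μ : Measure (ℝ × E)) [IsProbabilityMeasure μ]
    (μZ : Measure E) (hμZ : μZ = μ.map Prod.snd)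
    (Mbar : ℝ)
    (mfun : E → ℝ) (hmbd : ∀ z : E, |mfun z| ≤ Mbar)
    (hmrep : ∀ ψ : E → ℝ, Measurable ψ → (∃ Cψ : ℝ, ∀ z : E, |ψ z| ≤ Cψ) →
      ∫ p : ℝ × E, p.1 * ψ p.2 ∂μ = ∫ z, mfun z * ψ z ∂μZ)
    (δ C : ℝ)
    (g φ : E → ℝ) (hg : Measurable g) (hφ : Measurable φ)
    (hclose : ∀ x : E, |φ x - g x| ≤ δ)
    (F : ℝ → ℝ) (hF : ∀ t : ℝ, F t = (μZ {z | g z ≤ t}).toReal)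
    (hLip : ∀ a b : ℝ, |F a - F b| ≤ C * |a - b|)
    (D : E → E → ℝ)
    (hD : ∀ z₁ z₂ : E, D z₁ z₂ =
      (if φ z₂ < φ z₁ then (1 : ℝ) else 0) - (if g z₂ < g z₁ then (1 : ℝ) else 0))
    (ν : ℝ → E → ℝ)
    (hν : ∀ (y : ℝ) (z : E), ν y z =
      y * (∫ z', D z z' ∂μZ) + (∫ p : ℝ × E, p.1 * D p.2 z ∂μ)
        - 2 * ∫ z₂, (∫ p : ℝ × E, p.1 * D p.2 z₂ ∂μ) ∂μZ) :
    ∀ (y : ℝ) (z : E), |ν y z| ≤ 4 * C * δ * (|y| + 3 * Mbar) := by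
  intro y z
  obtain rfl : D = rankDiff φ g := funext₂ hD
  have : IsProbabilityMeasure μZ :=
    hμZ ▸ Measure.isProbabilityMeasure_map measurable_snd.aemeasurable
  have hδ : 0 ≤ δ := (abs_nonneg _).trans (hclose z)
  have hband : ∀ c, μZ.real {x | g x ∈ Icc (c - 2 * δ) (c + 2 * δ)} ≤ 4 * C * δ := fun c => by
    have hcdf : ∀ a b : ℝ, |μZ.real {x | g x ≤ a} - μZ.real {x | g x ≤ b}| ≤ C * |a - b| :=
      fun a b => by simpa only [hF, measureReal_def] using hLip a b
    convert measureReal_preimage_Icc_le hg hcdf (by linarith : c - 2 * δ ≤ c + 2 * δ) using 1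
    ring
  have hcross : ∀ z', |∫ p : ℝ × E, p.1 * rankDiff φ g p.2 z' ∂μ| ≤ Mbar * (4 * C * δ) :=
    fun z' => by
      rw [hmrep _ (measurable_rankDiff_left hφ hg z') ⟨1, fun x => abs_rankDiff_le_one φ g x z'⟩]
      exact abs_integral_mul_rankDiff_left_le hclose hband hmbd z'
  rw [hν]
  set I₁ := ∫ z', rankDiff φ g z z' ∂μZ
  set I₂ := ∫ p : ℝ × E, p.1 * rankDiff φ g p.2 z ∂μ
  set I₃ := ∫ z₂, (∫ p : ℝ × E, p.1 * rankDiff φ g p.2 z₂ ∂μ) ∂μZ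
  have hI₁ : |I₁| ≤ 4 * C * δ := abs_integral_rankDiff_right_le hclose hband z
  have hI₂ : |I₂| ≤ Mbar * (4 * C * δ) := hcross z
  have hI₃ : |I₃| ≤ Mbar * (4 * C * δ) := by
    simpa using norm_integral_le_of_norm_le_const (μ := μZ)
      (ae_of_all _ fun z' => (Real.norm_eq_abs _).trans_le (hcross z'))
  calc |y * I₁ + I₂ - 2 * I₃| ≤ |y| * |I₁| + |I₂| + 2 * |I₃| := by
        have h₂ : |2 * I₃| = 2 * |I₃| := by rw [abs_mul, abs_two]
        linarith [abs_sub (y * I₁ + I₂) (2 * I₃), abs_add_le (y * I₁) I₂, abs_mul y I₁]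
    _ ≤ |y| * (4 * C * δ) + Mbar * (4 * C * δ) + 2 * (Mbar * (4 * C * δ)) := by gcongr
    _ = 4 * C * δ * (|y| + 3 * Mbar) := by ring

/-- Lemma B.1(i): the Hájek projection `ν` of the rank-criterion kernel is bounded by
`4Cδ·(|y| + 3Mbar)` uniformly over candidate functions `φ` in a sup-norm `δ`-ball around
`g`, when the cdf of `g(Z)` is `C`-Lipschitz and the conditional mean `m` of `Y` given
`Z` is bounded by `Mbar`. -/
theorem stmt_14 {E : Type*} [MeasurableSpace E]
    (μ : Measure (ℝ × E)) [IsProbabilityMeasure μ]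
    (μZ : Measure E) (hμZ : μZ = μ.map Prod.snd)
    (hYint : Integrable (fun p : ℝ × E => p.1) μ)
    (Mbar : ℝ) (hMbar : 0 ≤ Mbar)
    (mfun : E → ℝ) (hmmeas : Measurable mfun) (hmbd : ∀ z : E, |mfun z| ≤ Mbar)
    (hmrep : ∀ ψ : E → ℝ, Measurable ψ → (∃ Cψ : ℝ, ∀ z : E, |ψ z| ≤ Cψ) →
      ∫ p : ℝ × E, p.1 * ψ p.2 ∂μ = ∫ z, mfun z * ψ z ∂μZ)
    (δ C : ℝ) (hδ : 0 < δ) (hC : 0 < C)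
    (g φ : E → ℝ) (hg : Measurable g) (hφ : Measurable φ)
    (hclose : ∀ x : E, |φ x - g x| ≤ δ)
    (F : ℝ → ℝ) (hF : ∀ t : ℝ, F t = (μZ {z | g z ≤ t}).toReal)
    (hLip : ∀ a b : ℝ, |F a - F b| ≤ C * |a - b|)
    (D : E → E → ℝ)
    (hD : ∀ z₁ z₂ : E, D z₁ z₂ =
      (if φ z₂ < φ z₁ then (1 : ℝ) else 0) - (if g z₂ < g z₁ then (1 : ℝ) else 0))
    (ν : ℝ → E → ℝ)
    (hν : ∀ (y : ℝ) (z : E), ν y z =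
      y * (∫ z', D z z' ∂μZ) + (∫ p : ℝ × E, p.1 * D p.2 z ∂μ)
        - 2 * ∫ z₂, (∫ p : ℝ × E, p.1 * D p.2 z₂ ∂μ) ∂μZ) :
    ∀ (y : ℝ) (z : E), |ν y z| ≤ 4 * C * δ * (|y| + 3 * Mbar) :=
  stmt_14_general μ μZ hμZ Mbar mfun hmbd hmrep δ C g φ hg hφ hclose F hF hLip D hD ν hν
end

section
/- Let α > 0, γ > 0, d > 0 and 0 < c < 1/2 be real numbers, and define K : ℕ → ℕ by K(n) := ⌈(c·log n)^{d/γ}⌉ for n ≥ 2. Then the sequence n ↦ max{ exp((K(n))^{γ/d}) · √(K(n)/n), (K(n))^{−α/d} } is O((log n)^{−α/γ}) as n → ∞, i.e. there exist a constant C > 0 and N ≥ 2 such that for all n ≥ N, max{ exp((K(n))^{γ/d})·√(K(n)/n), (K(n))^{−α/d} } ≤ C·(log n)^{−α/γ}. -/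
open Filter Real

set_option maxHeartbeats 1000000 in
/-- Corollary 3.1, part 2 (severely ill-posed case, deterministic rate computation):
with `K(n) = ⌈(c·log n)^{d/γ}⌉`, `0 < c < 1/2`, the quantity
`max{exp(K^{γ/d})·√(K/n), K^{−α/d}}` is `O((log n)^{−α/γ})`. -/
theorem stmt_17 (α γ d c : ℝ) (hα : 0 < α) (hγ : 0 < γ) (hd : 0 < d)
    (hc0 : 0 < c) (hc : c < 1 / 2)
    (K : ℕ → ℕ) (hK : ∀ n : ℕ, 2 ≤ n → K n = ⌈(c * Real.log n) ^ (d / γ)⌉₊) :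
    ∃ C : ℝ, 0 < C ∧ ∃ N : ℕ, 2 ≤ N ∧ ∀ n : ℕ, N ≤ n →
      max (Real.exp ((K n : ℝ) ^ (γ / d)) * Real.sqrt ((K n : ℝ) / (n : ℝ)))
          ((K n : ℝ) ^ (-(α / d)))
        ≤ C * (Real.log n) ^ (-(α / γ)) := by
  set p := d / γ with hp
  set q := γ / d with hq
  have hp0 : 0 < p := div_pos hd hγ
  have hq0 : 0 < q := div_pos hγ hd
  set c' : ℝ := c / 2 + 1 / 4 with hc'
  have hcc' : c < c' := by rw [hc']; linarith
  have hc'0 : 0 < c' := by rw [hc']; linarith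
  set δ : ℝ := 1 / 2 - c' with hδdef
  have hδ : 0 < δ := by rw [hδdef, hc']; linarith
  -- eventual conditions in terms of L = log n
  have hcp : c ^ p < c' ^ p := Real.rpow_lt_rpow hc0.le hcc' hp0
  have hE2 : ∀ᶠ L : ℝ in atTop, (c * L) ^ p + 1 ≤ (c' * L) ^ p := by
    have h1 : Tendsto (fun L : ℝ => L ^ p * (c' ^ p - c ^ p)) atTop atTop :=
      (tendsto_rpow_atTop hp0).atTop_mul_const (by linarith)
    filter_upwards [h1.eventually_ge_atTop 1, eventually_ge_atTop (0 : ℝ)] with L h1 hL0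
    rw [Real.mul_rpow hc0.le hL0, Real.mul_rpow hc'0.le hL0]
    nlinarith
  have hE3 : ∀ᶠ L : ℝ in atTop,
      (c' * L) ^ (p / 2) * L ^ (α / γ) * Real.exp (-δ * L) ≤ 1 := by
    have h0 : Tendsto (fun L : ℝ => c' ^ (p / 2) *
        (L ^ (p / 2 + α / γ) * Real.exp (-δ * L))) atTop (nhds (c' ^ (p / 2) * 0)) :=
      (tendsto_rpow_mul_exp_neg_mul_atTop_nhds_zero (p / 2 + α / γ) δ hδ).const_mul _
    rw [mul_zero] at h0
    filter_upwards [h0.eventually_le_const one_pos, eventually_gt_atTop (0 : ℝ)] with L h1 hL0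
    calc (c' * L) ^ (p / 2) * L ^ (α / γ) * Real.exp (-δ * L)
        = c' ^ (p / 2) * (L ^ (p / 2 + α / γ) * Real.exp (-δ * L)) := by
          rw [Real.mul_rpow hc'0.le hL0.le, Real.rpow_add hL0]; ring
      _ ≤ 1 := h1
  have hlog : Tendsto (fun n : ℕ => Real.log n) atTop atTop :=
    Real.tendsto_log_atTop.comp tendsto_natCast_atTop_atTop
  have hall : ∀ᶠ n : ℕ in atTop, 2 ≤ n ∧ 1 ≤ c * Real.log n ∧
      (c * Real.log n) ^ p + 1 ≤ (c' * Real.log n) ^ p ∧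
      (c' * Real.log n) ^ (p / 2) * (Real.log n) ^ (α / γ) *
        Real.exp (-δ * Real.log n) ≤ 1 := by
    filter_upwards [eventually_ge_atTop 2,
      hlog.eventually (eventually_ge_atTop (1 / c)),
      hlog.eventually hE2, hlog.eventually hE3] with n h1 h2 h3 h4
    exact ⟨h1, by rw [mul_comm]; exact (div_le_iff₀ hc0).mp h2, h3, h4⟩
  obtain ⟨N₀, hN₀⟩ := eventually_atTop.mp hall
  refine ⟨c ^ (-(α / γ)) + 1, by positivity, max N₀ 2, le_max_right _ _, fun n hn => ?_⟩
  obtain ⟨hn2, h1, h2, h3⟩ := hN₀ n (le_trans (le_max_left _ _) hn)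
  set L := Real.log n with hL
  have hL0 : 0 < L := by nlinarith
  have hn0 : (0 : ℝ) < n := by positivity
  have hKn : (K n : ℝ) = (⌈(c * L) ^ p⌉₊ : ℝ) := by rw [hK n hn2]
  have hcL0 : 0 ≤ c * L := by linarith
  have hlow : (c * L) ^ p ≤ (K n : ℝ) := hKn ▸ Nat.le_ceil _
  have hone : (1 : ℝ) ≤ (c * L) ^ p := Real.one_le_rpow h1 hp0.le
  have hKpos : (0 : ℝ) < (K n : ℝ) := lt_of_lt_of_le one_pos (hone.trans hlow)
  have hhigh : (K n : ℝ) ≤ (c' * L) ^ p := by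
    rw [hKn]
    exact le_trans (Nat.ceil_lt_add_one (Real.rpow_nonneg hcL0 p)).le h2
  have hLpow0 : (0 : ℝ) < L ^ (α / γ) := Real.rpow_pos_of_pos hL0 _
  have hLneg : (0 : ℝ) ≤ L ^ (-(α / γ)) := Real.rpow_nonneg hL0.le _
  refine max_le ?_ ?_
  · -- variance term
    have hKq : (K n : ℝ) ^ q ≤ c' * L := by
      calc (K n : ℝ) ^ q ≤ ((c' * L) ^ p) ^ q :=
            Real.rpow_le_rpow hKpos.le hhigh hq0.le
        _ = (c' * L) ^ (p * q) := by rw [← Real.rpow_mul (by positivity)]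
        _ = c' * L := by
            rw [show p * q = 1 by rw [hp, hq]; field_simp, Real.rpow_one]
    have hc'L0 : (0:ℝ) ≤ c' * L := by positivity
    have hsqrt : Real.sqrt ((K n : ℝ) / n) ≤ (c' * L) ^ (p / 2) * Real.exp (-(L / 2)) := by
      have hdiv : (K n : ℝ) / n ≤ (c' * L) ^ p / n := by gcongr
      have hnL : (n : ℝ) = Real.exp L := (Real.exp_log hn0).symm
      calc Real.sqrt ((K n : ℝ) / n) ≤ Real.sqrt ((c' * L) ^ p / n) :=
            Real.sqrt_le_sqrt hdiv
        _ = (c' * L) ^ (p / 2) * Real.exp (-(L / 2)) := by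
            rw [Real.sqrt_div (Real.rpow_nonneg hc'L0 p), hnL,
              show Real.exp L = Real.exp (L / 2) ^ 2 by
                rw [sq, ← Real.exp_add]; ring_nf,
              Real.sqrt_sq (Real.exp_pos _).le,
              Real.sqrt_eq_rpow, ← Real.rpow_mul hc'L0,
              show p * (1 / 2) = p / 2 by ring,
              div_eq_mul_inv, ← Real.exp_neg]
    calc Real.exp ((K n : ℝ) ^ q) * Real.sqrt ((K n : ℝ) / n)
        ≤ Real.exp (c' * L) * ((c' * L) ^ (p / 2) * Real.exp (-(L / 2))) :=
          mul_le_mul (Real.exp_le_exp.mpr hKq) hsqrt (Real.sqrt_nonneg _) (Real.exp_pos _).le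
      _ = (c' * L) ^ (p / 2) * Real.exp (-δ * L) := by
          rw [show Real.exp (c' * L) * ((c' * L) ^ (p / 2) * Real.exp (-(L / 2)))
              = (c' * L) ^ (p / 2) * (Real.exp (c' * L) * Real.exp (-(L / 2))) from by ring,
            ← Real.exp_add, show c' * L + -(L / 2) = -δ * L from by rw [hδdef]; ring]
      _ ≤ L ^ (-(α / γ)) := by
          rw [Real.rpow_neg hL0.le, ← one_div, le_div_iff₀ hLpow0]
          calc (c' * L) ^ (p / 2) * Real.exp (-δ * L) * L ^ (α / γ)
              = (c' * L) ^ (p / 2) * L ^ (α / γ) * Real.exp (-δ * L) := by ring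
            _ ≤ 1 := h3
      _ ≤ (c ^ (-(α / γ)) + 1) * L ^ (-(α / γ)) := by
          nlinarith [Real.rpow_nonneg hc0.le (-(α / γ))]
  · -- bias term
    calc (K n : ℝ) ^ (-(α / d)) ≤ ((c * L) ^ p) ^ (-(α / d)) :=
          Real.rpow_le_rpow_of_nonpos (by linarith) hlow (neg_nonpos.mpr (div_pos hα hd).le)
      _ = (c * L) ^ (-(α / γ)) := by
          rw [← Real.rpow_mul hcL0]
          congr 1
          rw [hp]; field_simp
      _ = c ^ (-(α / γ)) * L ^ (-(α / γ)) := Real.mul_rpow hc0.le hL0.le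
      _ ≤ (c ^ (-(α / γ)) + 1) * L ^ (-(α / γ)) := by nlinarith
end
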